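/- Let F be a group and let R ≤ K be normal subgroups of F. Then the sequence of group homomorphisms induced by the inclusions, 1 → (R ∩ ⟨K(F) ∩ K⟩)/⟨K(F) ∩ R⟩ → (R ∩ F')/⟨K(F) ∩ R⟩ → (K ∩ F')/⟨K(F) ∩ K⟩ → ((K ∩ F')·R)/(⟨K(F) ∩ K⟩·R) → 1, is exact: the first map is injective, the image of each map equals the kernel of the next, and the last map is surjective. -/
import Mathlib


open Subgroup

/-- `Kcl S = ⟨K(F) ∩ S⟩`: the subgroup of `F` generated by the commutators of `F`
that lie in `S`. -/
def Kcl {F : Type*} [Group F] (S : Subgroup F) : Subgroup F :=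
  Subgroup.closure (commutatorSet F ∩ (S : Set F))

instance Kcl_normal {F : Type*} [Group F] (S : Subgroup F) [hS : S.Normal] :
    (Kcl S).Normal := by
  constructor
  intro n hn g
  induction hn using Subgroup.closure_induction with
  | mem x hx =>
      obtain ⟨⟨a, b, hab⟩, hxS⟩ := hx
      apply Subgroup.subset_closure
      refine ⟨⟨g * a * g⁻¹, g * b * g⁻¹, ?_⟩, hS.conj_mem x hxS g⟩
      rw [← conjugate_commutatorElement, hab]
  | one => simpa using (Kcl S).one_mem
  | mul x y _ _ hx hy =>
      have h : g * (x * y) * g⁻¹ = (g * x * g⁻¹) * (g * y * g⁻¹) := by group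
      rw [h]; exact mul_mem hx hy
  | inv x _ hx =>
      have h : g * x⁻¹ * g⁻¹ = (g * x * g⁻¹)⁻¹ := by group
      rw [h]; exact inv_mem hx

theorem Kcl_le {F : Type*} [Group F] (S : Subgroup F) : Kcl S ≤ S :=
  (Subgroup.closure_le S).2 Set.inter_subset_right

theorem Kcl_le_commutator {F : Type*} [Group F] (S : Subgroup F) :
    Kcl S ≤ commutator F := by
  rw [commutator_eq_closure]
  exact Subgroup.closure_mono Set.inter_subset_left

theorem Kcl_mono {F : Type*} [Group F] {R K : Subgroup F} (h : R ≤ K) : Kcl R ≤ Kcl K :=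
  Subgroup.closure_mono (Set.inter_subset_inter_right _ h)

theorem subgroupOf_le_comap_inclusion {F : Type*} [Group F] {A B H₁ H₂ : Subgroup F}
    (hH : H₁ ≤ H₂) (hAB : A ≤ B) :
    A.subgroupOf H₁ ≤ (B.subgroupOf H₂).comap (Subgroup.inclusion hH) := by
  intro x hx
  rw [Subgroup.mem_comap, Subgroup.mem_subgroupOf, Subgroup.coe_inclusion]
  exact hAB (Subgroup.mem_subgroupOf.mp hx)

variable {F : Type*} [Group F]

/-- The map `(R ∩ ⟨K(F) ∩ K⟩)/⟨K(F) ∩ R⟩ → (R ∩ F')/⟨K(F) ∩ R⟩` induced by the inclusion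
(using `⟨K(F) ∩ K⟩ ≤ F'`). -/
def mapE (R K : Subgroup F) [R.Normal] [K.Normal] :
    (↥(R ⊓ Kcl K) ⧸ (Kcl R).subgroupOf (R ⊓ Kcl K)) →*
      (↥(R ⊓ commutator F) ⧸ (Kcl R).subgroupOf (R ⊓ commutator F)) :=
  QuotientGroup.map _ _ (Subgroup.inclusion (inf_le_inf_left R (Kcl_le_commutator K)))
    (subgroupOf_le_comap_inclusion _ le_rfl)

/-- The map `(R ∩ F')/⟨K(F) ∩ R⟩ → (K ∩ F')/⟨K(F) ∩ K⟩` induced by the inclusion. -/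
def mapRK (R K : Subgroup F) [R.Normal] [K.Normal] (hRK : R ≤ K) :
    (↥(R ⊓ commutator F) ⧸ (Kcl R).subgroupOf (R ⊓ commutator F)) →*
      (↥(K ⊓ commutator F) ⧸ (Kcl K).subgroupOf (K ⊓ commutator F)) :=
  QuotientGroup.map _ _ (Subgroup.inclusion (inf_le_inf_right _ hRK))
    (subgroupOf_le_comap_inclusion _ (Kcl_mono hRK))

/-- The map `(K ∩ F')/⟨K(F) ∩ K⟩ → ((K ∩ F')·R)/(⟨K(F) ∩ K⟩·R)` induced by the inclusion,
where the products of normal subgroups are the joins `(K ⊓ commutator F) ⊔ R` and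
`Kcl K ⊔ R`. -/
def mapQ (R K : Subgroup F) [R.Normal] [K.Normal] :
    (↥(K ⊓ commutator F) ⧸ (Kcl K).subgroupOf (K ⊓ commutator F)) →*
      (↥((K ⊓ commutator F) ⊔ R) ⧸ (Kcl K ⊔ R).subgroupOf ((K ⊓ commutator F) ⊔ R)) :=
  QuotientGroup.map _ _ (Subgroup.inclusion le_sup_left)
    (subgroupOf_le_comap_inclusion _ le_sup_left)

open scoped Pointwise

/-- for normal subgroups `R ≤ K` of `F`, the sequence
`1 → (R ∩ ⟨K(F) ∩ K⟩)/⟨K(F) ∩ R⟩ → (R ∩ F')/⟨K(F) ∩ R⟩ → (K ∩ F')/⟨K(F) ∩ K⟩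
→ ((K ∩ F')·R)/(⟨K(F) ∩ K⟩·R) → 1` of homomorphisms induced by the inclusions is exact. -/
theorem stmt8 (R K : Subgroup F) [R.Normal] [K.Normal] (hRK : R ≤ K) :
    Function.Injective (mapE R K) ∧
      (mapE R K).range = (mapRK R K hRK).ker ∧
      (mapRK R K hRK).range = (mapQ R K).ker ∧
      Function.Surjective (mapQ R K) := by
  refine ⟨?_, ?_, ?_, ?_⟩
  · -- injectivity of mapE
    rw [injective_iff_map_eq_one]
    intro q
    refine QuotientGroup.induction_on q fun x hx => ?_
    rw [mapE, QuotientGroup.map_mk, QuotientGroup.eq_one_iff, Subgroup.mem_subgroupOf,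
      Subgroup.coe_inclusion] at hx
    rw [QuotientGroup.eq_one_iff, Subgroup.mem_subgroupOf]
    exact hx
  · -- range mapE = ker mapRK
    ext q
    refine QuotientGroup.induction_on q fun x => ?_
    rw [MonoidHom.mem_ker, mapRK, QuotientGroup.map_mk, QuotientGroup.eq_one_iff,
      Subgroup.mem_subgroupOf, Subgroup.coe_inclusion]
    constructor
    · rintro ⟨p, hp⟩
      revert hp
      refine QuotientGroup.induction_on p fun y hy => ?_
      rw [mapE, QuotientGroup.map_mk, QuotientGroup.eq] at hy
      rw [Subgroup.mem_subgroupOf] at hy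
      have h1 : ((Subgroup.inclusion (inf_le_inf_left R (Kcl_le_commutator K)) y)⁻¹ * x : F)
          ∈ Kcl R := hy
      have h2 : (↑y : F) ∈ Kcl K := y.2.2
      have : (↑x : F) = (↑y : F) * ((↑y : F)⁻¹ * ↑x) := by group
      rw [this]
      exact mul_mem h2 (Kcl_mono hRK (by simpa using h1))
    · intro hx
      refine ⟨QuotientGroup.mk ⟨(↑x : F), x.2.1, hx⟩, ?_⟩
      rw [mapE, QuotientGroup.map_mk]
      congr 1
  · -- range mapRK = ker mapQ
    ext q
    refine QuotientGroup.induction_on q fun y => ?_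
    rw [MonoidHom.mem_ker, mapQ, QuotientGroup.map_mk, QuotientGroup.eq_one_iff,
      Subgroup.mem_subgroupOf, Subgroup.coe_inclusion]
    constructor
    · rintro ⟨p, hp⟩
      revert hp
      refine QuotientGroup.induction_on p fun x hx => ?_
      rw [mapRK, QuotientGroup.map_mk, QuotientGroup.eq, Subgroup.mem_subgroupOf] at hx
      have h1 : ((↑x : F)⁻¹ * ↑y) ∈ Kcl K := by simpa using hx
      have : (↑y : F) = (↑x : F) * ((↑x : F)⁻¹ * ↑y) := by group
      rw [this]
      exact Subgroup.mul_mem _ (Subgroup.mem_sup_right x.2.1) (Subgroup.mem_sup_left h1)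
    · intro hy
      have : (↑y : F) ∈ (((Kcl K : Set F) * (R : Set F) : Set F)) := by
        rw [← Subgroup.normal_mul]; exact hy
      obtain ⟨e, he, r, hr, hyer0⟩ := this
      have hyer : e * r = (↑y : F) := hyer0
      have hrF : r ∈ R ⊓ commutator F := by
        refine ⟨hr, ?_⟩
        have he' : e ∈ commutator F := Kcl_le_commutator K he
        have : r = e⁻¹ * ↑y := by rw [← hyer]; group
        rw [this]
        exact (commutator F).mul_mem ((commutator F).inv_mem he') y.2.2
      refine ⟨QuotientGroup.mk ⟨r, hrF⟩, ?_⟩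
      rw [mapRK, QuotientGroup.map_mk, QuotientGroup.eq, Subgroup.mem_subgroupOf]
      show ((Subgroup.inclusion _ ⟨r, hrF⟩ : ↥(K ⊓ commutator F)) : F)⁻¹ * ↑y ∈ Kcl K
      rw [Subgroup.coe_inclusion]
      show r⁻¹ * (↑y : F) ∈ Kcl K
      have : r⁻¹ * (↑y : F) = r⁻¹ * (e * r) := by rw [hyer]
      rw [this]
      have : r⁻¹ * (e * r) = r⁻¹ * e * r := by group
      rw [this]
      exact (Kcl_normal K).conj_mem' e he r
  · -- surjectivity of mapQ
    intro q
    refine QuotientGroup.induction_on q fun z => ?_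
    have : (↑z : F) ∈ ((((K ⊓ commutator F : Subgroup F) : Set F) * (R : Set F) : Set F)) := by
      rw [← Subgroup.mul_normal]; exact z.2
    obtain ⟨a, ha, r, hr, hz0⟩ := this
    have hz : a * r = (↑z : F) := hz0
    refine ⟨QuotientGroup.mk ⟨a, ha⟩, ?_⟩
    rw [mapQ, QuotientGroup.map_mk, QuotientGroup.eq, Subgroup.mem_subgroupOf]
    show ((Subgroup.inclusion _ ⟨a, ha⟩ : ↥((K ⊓ commutator F) ⊔ R)) : F)⁻¹ * ↑z ∈ Kcl K ⊔ R
    rw [Subgroup.coe_inclusion]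
    show a⁻¹ * (↑z : F) ∈ Kcl K ⊔ R
    have : a⁻¹ * (↑z : F) = r := by rw [← hz]; group
    rw [this]
    exact Subgroup.mem_sup_right hr
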